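/- arXiv:1911.01025 — 4 statements merged into one kernel-verified Lean document; each statement's English description precedes it below -/
import Mathlib

section
/- Let ε, q, q̃, b, b̃ ∈ ℂ, let Q̂ = [[q, q̃], [q̃, q]] be invertible, let B = [[b, b̃], [b̃, b]], and let Q be an arbitrary 2×2 complex matrix. Set M = ε(QB + I₂), M̂ = ε(Q̂B + I₂), λ̂₁ = ε + ε(b + b̃)(q + q̃), and λ̂₂ = ε + ε(b − b̃)(q − q̃). Then every eigenvalue λ of M satisfies min(|λ − λ̂₁|, |λ − λ̂₂|) ≤ ‖(Q − Q̂)·Q̂⁻¹‖ · max(|λ̂₁ − ε|, |λ̂₂ − ε|), where ‖·‖ denotes the ℓ² → ℓ² operator norm of a 2×2 complex matrix. -/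
/-! The matrices `[[p, s], [s, p]]` are normal with eigenvalues `p + s` and `p - s` on the
orthogonal eigenvectors `(1, 1)` and `(1, -1)`, so they stretch every vector by a factor between
the smallest and the largest modulus of these eigenvalues. Since
`M = M̂ + R (M̂ - ε I₂)` with `R = (Q - Q̂) Q̂⁻¹`, an eigenvector `x` of `M` for `λ` satisfies
`(M̂ - λ I₂) x = -R (M̂ - ε I₂) x`; bounding the left side below and the right side above by the
stretch factors of the normal matrices `M̂ - λ I₂` and `M̂ - ε I₂` gives the claim. -/

/-- The `ℓ² → ℓ²` operator norm of a `2 × 2` complex matrix, i.e. the norm of the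
associated continuous linear map on `EuclideanSpace ℂ (Fin 2)`. -/
noncomputable def l2opNorm (A : Matrix (Fin 2) (Fin 2) ℂ) : ℝ :=
  ‖(Matrix.toEuclideanCLM (𝕜 := ℂ) (n := Fin 2) A :
      EuclideanSpace ℂ (Fin 2) →L[ℂ] EuclideanSpace ℂ (Fin 2))‖

open Matrix

namespace Matrix

theorem smul_mul_add_one_eq_of_isUnit {α n : Type*} [CommRing α] [Fintype n] [DecidableEq n]
    (ε : α) (Q Qh B : Matrix n n α) (hQh : IsUnit Qh) :
    ε • (Q * B + 1) = ε • (Qh * B + 1) + (Q - Qh) * Qh⁻¹ * (ε • (Qh * B + 1) - ε • 1) := by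
  rw [smul_add, smul_add, add_sub_cancel_right, Matrix.mul_smul, ← mul_assoc, mul_assoc (Q - Qh),
    nonsing_inv_mul _ ((isUnit_iff_isUnit_det _).1 hQh), mul_one, sub_mul, smul_sub]
  abel

theorem smul_symm_fin_two_mul_add_one_sub_smul {α : Type*} [CommRing α] (ε q qt b bt μ : α) :
    ε • (!![q, qt; qt, q] * !![b, bt; bt, b] + 1) - μ • 1
      = !![ε * (q * b + qt * bt + 1) - μ, ε * (q * bt + qt * b);
          ε * (q * bt + qt * b), ε * (q * b + qt * bt + 1) - μ] := by
  rw [mul_fin_two, one_fin_two]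
  ext i j; fin_cases i <;> fin_cases j <;> simp [-mul_eq_mul_left_iff] <;> ring

theorem exists_toEuclideanCLM_eq_smul_of_isRoot_charpoly {𝕜 n : Type*} [RCLike 𝕜] [Fintype n]
    [DecidableEq n] {A : Matrix n n 𝕜} {μ : 𝕜} (h : A.charpoly.IsRoot μ) :
    ∃ x : EuclideanSpace 𝕜 n, x ≠ 0 ∧ toEuclideanCLM (𝕜 := 𝕜) A x = μ • x := by
  rw [← charpoly_toLin', ← Module.End.hasEigenvalue_iff_isRoot_charpoly] at h
  obtain ⟨v, hv⟩ := h.exists_hasEigenvector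
  refine ⟨WithLp.toLp 2 v, by simpa using hv.2, ?_⟩
  rw [toEuclideanCLM_toLp, ← toLin'_apply, hv.apply_eq_smul, WithLp.toLp_smul]

theorem norm_toEuclideanCLM_sub_smul_le_of_eq_smul {𝕜 n : Type*} [RCLike 𝕜] [Fintype n]
    [DecidableEq n] {M Mh R : Matrix n n 𝕜} {ε μ : 𝕜} (hM : M = Mh + R * (Mh - ε • 1))
    {x : EuclideanSpace 𝕜 n} (hx : toEuclideanCLM (𝕜 := 𝕜) M x = μ • x) :
    ‖toEuclideanCLM (𝕜 := 𝕜) (Mh - μ • 1) x‖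
      ≤ ‖toEuclideanCLM (𝕜 := 𝕜) R‖ * ‖toEuclideanCLM (𝕜 := 𝕜) (Mh - ε • 1) x‖ := by
  have hx' : toEuclideanCLM (𝕜 := 𝕜) (Mh - μ • 1) x
      = -toEuclideanCLM (𝕜 := 𝕜) R (toEuclideanCLM (𝕜 := 𝕜) (Mh - ε • 1) x) := by
    rw [hM] at hx
    simp only [map_add, map_mul, map_sub, map_smul, map_one, _root_.add_apply,
      mul_apply_eq_comp, _root_.sub_apply, _root_.smul_apply, one_apply_eq_self] at hx ⊢
    rw [← hx]
    abel
  rw [hx', norm_neg]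
  exact (toEuclideanCLM (𝕜 := 𝕜) R).le_opNorm _

end Matrix

namespace EuclideanSpace

theorem norm_sq_fin_two {𝕜 : Type*} [RCLike 𝕜] (x : EuclideanSpace 𝕜 (Fin 2)) :
    ‖x‖ ^ 2 = (‖x 0 + x 1‖ ^ 2 + ‖x 0 - x 1‖ ^ 2) / 2 := by
  rw [norm_sq_eq, Fin.sum_univ_two, parallelogram_law_with_norm 𝕜]
  ring

end EuclideanSpace

section SymmetricTwoByTwo

variable {𝕜 : Type*} [RCLike 𝕜] (p s : 𝕜) (x : EuclideanSpace 𝕜 (Fin 2))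

theorem norm_sq_toEuclideanCLM_symm_two :
    ‖toEuclideanCLM (𝕜 := 𝕜) !![p, s; s, p] x‖ ^ 2
      = (‖p + s‖ ^ 2 * ‖x 0 + x 1‖ ^ 2 + ‖p - s‖ ^ 2 * ‖x 0 - x 1‖ ^ 2) / 2 := by
  rw [EuclideanSpace.norm_sq_fin_two]
  simp only [ofLp_toEuclideanCLM, mulVec, dotProduct, Fin.sum_univ_two, of_apply, cons_val',
    cons_val_zero, cons_val_one, empty_val', cons_val_fin_one]
  rw [show p * x 0 + s * x 1 + (s * x 0 + p * x 1) = (p + s) * (x 0 + x 1) by ring,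
    show p * x 0 + s * x 1 - (s * x 0 + p * x 1) = (p - s) * (x 0 - x 1) by ring,
    norm_mul, norm_mul, mul_pow, mul_pow]

theorem min_mul_norm_le_norm_toEuclideanCLM_symm_two :
    min ‖p + s‖ ‖p - s‖ * ‖x‖ ≤ ‖toEuclideanCLM (𝕜 := 𝕜) !![p, s; s, p] x‖ := by
  have hmin : 0 ≤ min ‖p + s‖ ‖p - s‖ := le_min (norm_nonneg _) (norm_nonneg _)
  rw [← pow_le_pow_iff_left₀ (by positivity) (norm_nonneg _) two_ne_zero, mul_pow,
    norm_sq_toEuclideanCLM_symm_two, EuclideanSpace.norm_sq_fin_two]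
  have h₁ := pow_le_pow_left₀ hmin (min_le_left ‖p + s‖ ‖p - s‖) 2
  have h₂ := pow_le_pow_left₀ hmin (min_le_right ‖p + s‖ ‖p - s‖) 2
  nlinarith [sq_nonneg ‖x 0 + x 1‖, sq_nonneg ‖x 0 - x 1‖]

theorem norm_toEuclideanCLM_symm_two_le :
    ‖toEuclideanCLM (𝕜 := 𝕜) !![p, s; s, p] x‖ ≤ max ‖p + s‖ ‖p - s‖ * ‖x‖ := by
  have hmax : 0 ≤ max ‖p + s‖ ‖p - s‖ := (norm_nonneg _).trans (le_max_left _ _)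
  rw [← pow_le_pow_iff_left₀ (norm_nonneg _) (by positivity) two_ne_zero, mul_pow,
    norm_sq_toEuclideanCLM_symm_two, EuclideanSpace.norm_sq_fin_two]
  have h₁ := pow_le_pow_left₀ (norm_nonneg _) (le_max_left ‖p + s‖ ‖p - s‖) 2
  have h₂ := pow_le_pow_left₀ (norm_nonneg _) (le_max_right ‖p + s‖ ‖p - s‖) 2
  nlinarith [sq_nonneg ‖x 0 + x 1‖, sq_nonneg ‖x 0 - x 1‖]

end SymmetricTwoByTwo

/-- Bauer–Fike type bound.  With `Q̂ = [[q, q̃], [q̃, q]]` invertible,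
`B = [[b, b̃], [b̃, b]]`, `M = ε (Q B + I₂)`, `M̂ = ε (Q̂ B + I₂)`,
`λ̂₁ = ε + ε (b + b̃)(q + q̃)`, `λ̂₂ = ε + ε (b - b̃)(q - q̃)`, every eigenvalue `λ` of `M`
(i.e. root of its characteristic polynomial) satisfies
`min |λ - λ̂₁| |λ - λ̂₂| ≤ ‖(Q - Q̂) Q̂⁻¹‖ * max |λ̂₁ - ε| |λ̂₂ - ε|`. -/
theorem stmt_4 (ε q qt b bt : ℂ) (Q : Matrix (Fin 2) (Fin 2) ℂ)
    (hQhat : IsUnit (!![q, qt; qt, q] : Matrix (Fin 2) (Fin 2) ℂ))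
    (lam : ℂ)
    (hlam : (Matrix.charpoly (ε • (Q * !![b, bt; bt, b] + 1))).IsRoot lam) :
    min ‖lam - (ε + ε * (b + bt) * (q + qt))‖ ‖lam - (ε + ε * (b - bt) * (q - qt))‖
      ≤ l2opNorm ((Q - !![q, qt; qt, q]) * (!![q, qt; qt, q])⁻¹)
        * max ‖(ε + ε * (b + bt) * (q + qt)) - ε‖ ‖(ε + ε * (b - bt) * (q - qt)) - ε‖ := by
  set l₁ := ε + ε * (b + bt) * (q + qt)
  set l₂ := ε + ε * (b - bt) * (q - qt)
  set P := ε * (q * b + qt * bt + 1)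
  set S := ε * (q * bt + qt * b)
  obtain ⟨x, hx0, hx⟩ := exists_toEuclideanCLM_eq_smul_of_isRoot_charpoly hlam
  have lower := min_mul_norm_le_norm_toEuclideanCLM_symm_two (P - lam) S x
  rw [show P - lam + S = -(lam - l₁) by simp only [P, S, l₁]; ring,
    show P - lam - S = -(lam - l₂) by simp only [P, S, l₂]; ring, norm_neg, norm_neg] at lower
  have upper := norm_toEuclideanCLM_symm_two_le (P - ε) S x
  rw [show P - ε + S = l₁ - ε by simp only [P, S, l₁]; ring,
    show P - ε - S = l₂ - ε by simp only [P, S, l₂]; ring] at upper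
  have perturb := norm_toEuclideanCLM_sub_smul_le_of_eq_smul
    (smul_mul_add_one_eq_of_isUnit ε Q _ _ hQhat) hx
  rw [smul_symm_fin_two_mul_add_one_sub_smul, smul_symm_fin_two_mul_add_one_sub_smul] at perturb
  refine le_of_mul_le_mul_right ?_ (norm_pos_iff.2 hx0)
  calc _ ≤ _ := lower
    _ ≤ _ := perturb
    _ ≤ _ := mul_le_mul_of_nonneg_left upper (norm_nonneg _)
    _ = _ := (mul_assoc _ _ _).symm
end

section
/- Let b > 0 and let κ, k be real numbers with k > 0 and k ≠ |κ + nb| for every integer n; for n ∈ ℤ set κ_n = κ + nb, define ζ_n = √(k² − κ_n²) (the positive real square root) when |κ_n| < k and ζ_n = i√(κ_n² − k²) when |κ_n| > k, and set d = 2π/b. Then the function on the nonzero integers n ↦ 1/(2π|n|) − (i/d)·(1/ζ_n), with values in ℂ, is summable (i.e., the series Σ_{n∈ℤ, n≠0} (1/(2π|n|) − (i/d)(1/ζ_n)) converges absolutely). -/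
/-!
For `|κ_n| ≥ |k|` one has `ζ_n = i s_n` with `s_n = √(κ_n² − k²)`, so the `n`-th term is the real
number `(s_n − |n| b) / (2π |n| s_n)`. Since `|s_n − |κ_n|| ≤ |k|` and `||κ_n| − |n| b| ≤ |κ|`, the
numerator stays bounded while the denominator grows like `n²`; hence the terms are `O(1/n²)`.
-/

open Real

/-- `ζ_n` from the paper: with `κ_n = κ + n b`, `ζ_n = √(k² − κ_n²)` when `|κ_n| < k`
and `ζ_n = i √(κ_n² − k²)` when `|κ_n| > k`. -/
noncomputable def zeta (b κ k : ℝ) (n : ℤ) : ℂ :=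
  if |κ + (n : ℝ) * b| < k then ((Real.sqrt (k ^ 2 - (κ + (n : ℝ) * b) ^ 2) : ℝ) : ℂ)
  else Complex.I * ((Real.sqrt ((κ + (n : ℝ) * b) ^ 2 - k ^ 2) : ℝ) : ℂ)

open Filter

lemma abs_sub_abs_le_sqrt_sq_sub_sq {x k : ℝ} (h : |k| ≤ |x|) :
    |x| - |k| ≤ √(x ^ 2 - k ^ 2) :=
  Real.le_sqrt_of_sq_le <| by
    nlinarith [sq_abs x, sq_abs k, mul_le_mul_of_nonneg_left h (abs_nonneg k)]

lemma abs_sqrt_sq_sub_sq_sub_abs_le {x k : ℝ} (h : |k| ≤ |x|) :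
    |√(x ^ 2 - k ^ 2) - (|x|)| ≤ |k| := by
  have hle : √(x ^ 2 - k ^ 2) ≤ |x| :=
    Real.sqrt_le_iff.2 ⟨abs_nonneg x, by nlinarith [sq_abs x, sq_nonneg k]⟩
  rw [abs_sub_le_iff]
  constructor <;> linarith [abs_sub_abs_le_sqrt_sq_sub_sq h, abs_nonneg k]

lemma abs_one_div_sub_div_le {a b s c : ℝ} (ha : 0 < a) (hb : 0 < b) (hs : a * b / 2 ≤ s)
    (hc : |s - a * b| ≤ c) : |1 / a - b / s| ≤ 2 * c / (b * a ^ 2) := by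
  have hs0 : 0 < s := lt_of_lt_of_le (by positivity) hs
  have hsub : 1 / a - b / s = (s - a * b) / (a * s) := by field_simp
  calc |1 / a - b / s| = |s - a * b| / (a * s) := by rw [hsub, abs_div, abs_of_pos (mul_pos ha hs0)]
    _ ≤ c / (a * (a * b / 2)) :=
      div_le_div₀ ((abs_nonneg _).trans hc) hc (by positivity) (by gcongr)
    _ = 2 * c / (b * a ^ 2) := by field_simp

lemma zeta_eq_I_mul_sqrt {b κ k : ℝ} {n : ℤ} (h : |k| ≤ |κ + n * b|) :
    zeta b κ k n = Complex.I * √((κ + n * b) ^ 2 - k ^ 2) := by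
  rw [zeta, if_neg (not_lt.2 ((le_abs_self k).trans h))]

lemma I_div_mul_one_div_I_mul (d s : ℝ) :
    Complex.I / d * (1 / (Complex.I * s)) = ((1 / (d * s) : ℝ) : ℂ) := by
  push_cast
  rw [div_mul_div_comm, mul_one, mul_left_comm, div_mul_cancel_left₀ Complex.I_ne_zero, one_div]

lemma tendsto_abs_intCast_cofinite_atTop : Tendsto (fun n : ℤ => |(n : ℝ)|) cofinite atTop := by
  have := tendsto_norm_cocompact_atTop (E := ℤ)
  rw [cocompact_eq_cofinite] at this
  exact this.congr Int.norm_eq_abs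

lemma norm_sub_I_div_mul_one_div_zeta_le {b κ k : ℝ} (hb : 0 < b) {n : ℤ} (hn : n ≠ 0)
    (hlarge : 2 * (|κ| + |k|) ≤ |(n : ℝ)| * b) :
    ‖((1 / (2 * π * |(n : ℝ)|) : ℝ) : ℂ)
        - (Complex.I / ((2 * π / b : ℝ) : ℂ)) * (1 / zeta b κ k n)‖
      ≤ (|κ| + |k|) / (π * b) * (1 / (n : ℝ) ^ 2) := by
  set x := κ + n * b
  set s := √(x ^ 2 - k ^ 2)
  have ha : 0 < |(n : ℝ)| := abs_pos.2 (Int.cast_ne_zero.2 hn)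
  have hx : |(|x|) - |(n : ℝ)| * b| ≤ |κ| := by
    have := abs_abs_sub_abs_le_abs_sub x (n * b)
    rwa [abs_mul, abs_of_pos hb, show x - n * b = κ by ring] at this
  have hkx : |k| ≤ |x| := by linarith [(abs_le.1 hx).1, abs_nonneg κ, abs_nonneg k]
  have hs : |s - |(n : ℝ)| * b| ≤ |k| + |κ| :=
    (abs_sub_le _ (|x|) _).trans (add_le_add (abs_sqrt_sq_sub_sq_sub_abs_le hkx) hx)
  have hs_lower : |(n : ℝ)| * b / 2 ≤ s := by linarith [(abs_le.1 hs).1]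
  have hs0 : 0 < s := lt_of_lt_of_le (by positivity) hs_lower
  rw [zeta_eq_I_mul_sqrt hkx, I_div_mul_one_div_I_mul, ← Complex.ofReal_sub, Complex.norm_real,
    Real.norm_eq_abs]
  have hsplit : 1 / (2 * π * |(n : ℝ)|) - 1 / (2 * π / b * s)
      = 1 / (2 * π) * (1 / |(n : ℝ)| - b / s) := by
    field_simp
  rw [hsplit, abs_mul, abs_of_pos (by positivity)]
  calc 1 / (2 * π) * |1 / |(n : ℝ)| - b / s|
      ≤ 1 / (2 * π) * (2 * (|k| + |κ|) / (b * |(n : ℝ)| ^ 2)) := by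
        gcongr
        exact abs_one_div_sub_div_le ha hb hs_lower hs
    _ = (|κ| + |k|) / (π * b) * (1 / (n : ℝ) ^ 2) := by
        rw [sq_abs]; field_simp; ring

theorem stmt_8_general (b κ k : ℝ) (hb : 0 < b) :
    Summable (fun n : {m : ℤ // m ≠ 0} =>
      ((1 / (2 * π * |((n : ℤ) : ℝ)|) : ℝ) : ℂ)
        - (Complex.I / ((2 * π / b : ℝ) : ℂ)) * (1 / zeta b κ k (n : ℤ))) := by
  have hlarge : ∀ᶠ n : ℤ in cofinite, 2 * (|κ| + |k|) ≤ |(n : ℝ)| * b :=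
    (tendsto_abs_intCast_cofinite_atTop.eventually_ge_atTop (2 * (|κ| + |k|) / b)).mono
      fun _ => (div_le_iff₀ hb).1
  have hsummable : Summable (fun n : ℤ => ((1 / (2 * π * |(n : ℝ)|) : ℝ) : ℂ)
      - (Complex.I / ((2 * π / b : ℝ) : ℂ)) * (1 / zeta b κ k n)) :=
    Summable.of_norm_bounded_eventually
      ((Real.summable_one_div_int_pow.2 one_lt_two).mul_left _)
      ((hlarge.and (eventually_cofinite_ne 0)).mono fun n hn =>
        norm_sub_I_div_mul_one_div_zeta_le hb hn.2 hn.1)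
  exact hsummable.subtype _

/-- with `d = 2π/b`, the family `n ↦ 1/(2π|n|) − (i/d)(1/ζ_n)` over the
nonzero integers is (absolutely) summable. -/
theorem stmt_8 (b κ k : ℝ) (hb : 0 < b) (hk : 0 < k)
    (hcut : ∀ n : ℤ, k ≠ |κ + (n : ℝ) * b|) :
    Summable (fun n : {m : ℤ // m ≠ 0} =>
      ((1 / (2 * π * |((n : ℤ) : ℝ)|) : ℝ) : ℂ)
        - (Complex.I / ((2 * π / b : ℝ) : ℂ)) * (1 / zeta b κ k (n : ℤ))) :=
  stmt_8_general b κ k hb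
end

section
/- There exists a constant C > 0 such that for every real θ with 0 < |θ| ≤ 1, | Σ_{n∈ℤ, n≠0} sgn(n)·e^{inθ}/n² + 2iθ·ln|θ| | ≤ C|θ|, where the (absolutely convergent) sum is over all nonzero integers n and sgn(n) = n/|n|. -/
/-!
Pairing `n` with `-n` turns the series into `2i Cl₂(θ)`, where `Cl₂(θ) = Σ_{n ≥ 1} sin(nθ)/n²`.
Split `Cl₂(θ)` at `N = ⌊1/|θ|⌋`. For `n ≤ N` we have `|nθ| ≤ 1` and `|sin(nθ) - nθ| ≤ |nθ|³/6`,
so the head is `θ H_N + O(|θ|)`, and `H_N = log N + O(1) = -log|θ| + O(1)`. The tail is bounded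
by `Σ_{n > N} 1/n² ≤ 2/(N + 1) < 2|θ|`.
-/

open Real

lemma tsum_inv_sq_nat_add_le (N : ℕ) :
    ∑' k : ℕ, ((((k + (N + 1) : ℕ)) : ℝ) ^ 2)⁻¹ ≤ 2 / (N + 1) := by
  refine Real.tsum_le_of_sum_range_le (fun _ => by positivity) fun m => ?_
  have h := sum_Ioo_inv_sq_le (α := ℝ) N (N + 1 + m)
  rw [← Finset.Ico_add_one_left_eq_Ioo, Finset.sum_Ico_eq_sum_range, Nat.add_sub_cancel_left] at h
  simpa only [Nat.add_comm _ (N + 1)] using h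

lemma abs_harmonic_sub_log_le {N : ℕ} {x : ℝ} (hN : 0 < N) (hNx : N ≤ x) (hxN : x ≤ N + 1) :
    |(harmonic N : ℝ) - log x| ≤ 1 := by
  have hN' : (0 : ℝ) < N := by exact_mod_cast hN
  have h₁ : log N ≤ log x := log_le_log hN' hNx
  have h₂ : log x ≤ log (N + 1) := log_le_log (hN'.trans_le hNx) hxN
  have h₃ := log_add_one_le_harmonic N
  have h₄ := harmonic_le_one_add_log N
  push_cast at h₃
  rw [abs_le]
  constructor <;> linarith

-- The `n = 0` term is `0⁻¹ = 0`.
lemma harmonic_eq_sum_range_succ_inv (N : ℕ) :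
    (harmonic N : ℝ) = ∑ n ∈ Finset.range (N + 1), (n : ℝ)⁻¹ := by
  rw [Finset.sum_range_succ']
  simp [harmonic]

lemma abs_sin_mul_div_sq_sub_div_le (θ : ℝ) (n : ℕ) :
    |sin (n * θ) / n ^ 2 - θ / n| ≤ n * |θ| ^ 3 / 6 := by
  rcases n.eq_zero_or_pos with rfl | hn
  · simp
  have hn' : (0 : ℝ) < n := by exact_mod_cast hn
  have h : sin (n * θ) / n ^ 2 - θ / n = -((n * θ - sin (n * θ)) / n ^ 2) := by
    field_simp
    ring
  rw [h, abs_neg, abs_div, abs_of_pos (by positivity : (0 : ℝ) < n ^ 2),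
    div_le_iff₀ (by positivity)]
  calc |n * θ - sin (n * θ)| ≤ |n * θ| ^ 3 / 6 := abs_sub_sin_le _
    _ = n * |θ| ^ 3 / 6 * n ^ 2 := by rw [abs_mul, abs_of_pos hn']; ring

lemma abs_sin_mul_div_sq_le (θ : ℝ) (n : ℕ) : |sin (n * θ) / n ^ 2| ≤ ((n : ℝ) ^ 2)⁻¹ := by
  rw [abs_div, abs_of_nonneg (by positivity : (0 : ℝ) ≤ n ^ 2), div_eq_mul_inv]
  exact mul_le_of_le_one_left (by positivity) (abs_sin_le_one _)

lemma summable_sin_mul_div_sq (θ : ℝ) : Summable fun n : ℕ => sin (n * θ) / n ^ 2 :=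
  .of_norm_bounded (Real.summable_nat_pow_inv.mpr one_lt_two) (abs_sin_mul_div_sq_le θ)

lemma abs_sum_sin_mul_div_sq_sub_mul_harmonic_le {θ : ℝ} {N : ℕ} (hθ : |θ| ≤ 1)
    (hNθ : N * |θ| ≤ 1) :
    |∑ n ∈ Finset.range (N + 1), sin (n * θ) / n ^ 2 - θ * harmonic N| ≤ |θ| / 3 := by
  rw [harmonic_eq_sum_range_succ_inv, Finset.mul_sum, ← Finset.sum_sub_distrib]
  calc _ ≤ ∑ n ∈ Finset.range (N + 1), (n : ℝ) * |θ| ^ 3 / 6 := by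
        refine (Finset.abs_sum_le_sum_abs _ _).trans (Finset.sum_le_sum fun n _ => ?_)
        simpa only [div_eq_mul_inv] using abs_sin_mul_div_sq_sub_div_le θ n
    _ ≤ ∑ n ∈ Finset.range (N + 1), (N : ℝ) * |θ| ^ 3 / 6 := by
        gcongr with n hn
        exact_mod_cast Finset.mem_range_succ_iff.mp hn
    _ = (N * |θ|) * ((N + 1) * |θ|) * |θ| / 6 := by
        rw [Finset.sum_const, Finset.card_range, nsmul_eq_mul]
        push_cast
        ring
    _ ≤ 1 * 2 * |θ| / 6 := by gcongr; linarith
    _ = |θ| / 3 := by ring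

-- The Clausen function `Cl₂`; the `n = 0` term is `sin 0 / 0 = 0`.
noncomputable def clausen (θ : ℝ) : ℝ := ∑' n : ℕ, sin (n * θ) / n ^ 2

theorem abs_clausen_add_mul_log_le {θ : ℝ} (h0 : θ ≠ 0) (h1 : |θ| ≤ 1) :
    |clausen θ + θ * log (|θ|)| ≤ 4 * |θ| := by
  set N := ⌊|θ|⁻¹⌋₊
  have hθ : 0 < |θ| := abs_pos.mpr h0
  have hN : 0 < N := Nat.floor_pos.mpr (one_le_inv₀ hθ |>.mpr h1)
  have hNle : (N : ℝ) ≤ |θ|⁻¹ := Nat.floor_le (by positivity)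
  have hltN : |θ|⁻¹ < N + 1 := Nat.lt_floor_add_one _
  have hNθ : N * |θ| ≤ 1 := (le_div_iff₀ hθ).mp (by rwa [one_div])
  set f := fun n : ℕ => sin (n * θ) / n ^ 2
  have head := abs_sum_sin_mul_div_sq_sub_mul_harmonic_le h1 hNθ
  have harm : |θ * (harmonic N - log |θ|⁻¹)| ≤ |θ| := by
    rw [abs_mul]
    exact mul_le_of_le_one_right hθ.le (abs_harmonic_sub_log_le hN hNle hltN.le)
  have tail : |∑' k, f (k + (N + 1))| ≤ 2 * |θ| := by
    have hg := (summable_nat_add_iff (N + 1)).mpr (Real.summable_nat_pow_inv.mpr one_lt_two)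
    calc |∑' k, f (k + (N + 1))| ≤ ∑' k : ℕ, ((((k + (N + 1) : ℕ)) : ℝ) ^ 2)⁻¹ :=
          tsum_of_norm_bounded (f := fun k => f (k + (N + 1))) hg.hasSum fun k =>
            abs_sin_mul_div_sq_le θ _
      _ ≤ 2 / (N + 1) := tsum_inv_sq_nat_add_le N
      _ ≤ 2 * |θ| := by
          rw [div_le_iff₀ (by positivity)]
          nlinarith [(inv_lt_iff_one_lt_mul₀ hθ).mp hltN]
  have split : clausen θ + θ * log (|θ|) = (∑ n ∈ Finset.range (N + 1), f n - θ * harmonic N)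
      + θ * (harmonic N - log |θ|⁻¹) + ∑' k, f (k + (N + 1)) := by
    rw [clausen, ← (summable_sin_mul_div_sq θ).sum_add_tsum_nat_add (N + 1), log_inv]
    ring
  rw [split]
  linarith [abs_add_three (∑ n ∈ Finset.range (N + 1), f n - θ * harmonic N)
    (θ * (harmonic N - log |θ|⁻¹)) (∑' k, f (k + (N + 1)))]

open Complex in
noncomputable def signExpTerm (θ : ℝ) (m : ℤ) : ℂ :=
  (Int.sign m : ℂ) * exp (I * m * θ) / (m : ℂ) ^ 2

lemma norm_signExpTerm_le (θ : ℝ) (m : ℤ) : ‖signExpTerm θ m‖ ≤ 1 / (m : ℝ) ^ 2 := by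
  have hexp : ‖Complex.exp (Complex.I * m * θ)‖ = 1 := by
    rw [← Complex.ofReal_intCast, mul_assoc, ← Complex.ofReal_mul, mul_comm,
      Complex.norm_exp_ofReal_mul_I]
  rcases eq_or_ne m 0 with rfl | hm
  · simp [signExpTerm]
  rw [signExpTerm, norm_div, norm_mul, hexp, mul_one, norm_pow, Complex.norm_intCast,
    Complex.norm_intCast, sq_abs, ← Int.cast_abs, Int.abs_sign_of_ne_zero hm, Int.cast_one]

lemma summable_signExpTerm (θ : ℝ) : Summable (signExpTerm θ) :=
  .of_norm_bounded (Real.summable_one_div_int_pow.mpr one_lt_two) (norm_signExpTerm_le θ)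

lemma signExpTerm_natCast_add_neg (θ : ℝ) (n : ℕ) :
    signExpTerm θ n + signExpTerm θ (-n) = 2 * Complex.I * ((sin (n * θ) / n ^ 2 : ℝ) : ℂ) := by
  rcases n.eq_zero_or_pos with rfl | hn
  · simp [signExpTerm]
  have hsign : Int.sign (n : ℤ) = 1 := Int.sign_eq_one_of_pos (by exact_mod_cast hn)
  simp only [signExpTerm, Int.sign_neg, hsign, Int.cast_neg, Int.cast_natCast, Int.cast_one]
  rw [Complex.ofReal_div, Complex.ofReal_sin, Complex.sin, Complex.ofReal_mul]
  push_cast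
  ring_nf
  rw [Complex.I_sq]
  ring

lemma tsum_signExpTerm (θ : ℝ) :
    ∑' m : {m : ℤ // m ≠ 0}, signExpTerm θ m = 2 * Complex.I * clausen θ := by
  have hzero : signExpTerm θ 0 = 0 := by simp [signExpTerm]
  have hsupp : Function.support (signExpTerm θ) ⊆ {m | m ≠ 0} := by
    rintro m hm rfl
    exact hm hzero
  refine (tsum_subtype_eq_of_support_subset hsupp).trans ?_
  rw [← add_zero (∑' m, signExpTerm θ m), ← hzero, ← tsum_nat_add_neg (summable_signExpTerm θ),
    clausen, Complex.ofReal_tsum, ← tsum_mul_left]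
  exact tsum_congr (signExpTerm_natCast_add_neg θ)

/-- there is `C > 0` such that for all real `θ` with `0 < |θ| ≤ 1`,
`|Σ_{n ≠ 0} sgn(n) e^{i n θ}/n² + 2 i θ ln|θ|| ≤ C |θ|`, the sum being over all
nonzero integers. -/
theorem stmt_9 :
    ∃ C > 0, ∀ θ : ℝ, 0 < |θ| → |θ| ≤ 1 →
      ‖(∑' n : {m : ℤ // m ≠ 0},
            (Int.sign (n : ℤ) : ℂ) * Complex.exp (Complex.I * ((n : ℤ) : ℂ) * (θ : ℂ))
              / ((n : ℤ) : ℂ) ^ 2)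
          + 2 * Complex.I * (θ : ℂ) * ((Real.log |θ| : ℝ) : ℂ)‖
        ≤ C * |θ| := by
  refine ⟨8, by norm_num, fun θ h0 h1 => ?_⟩
  have hfactor : 2 * Complex.I * clausen θ + 2 * Complex.I * θ * (log |θ| : ℝ)
      = 2 * Complex.I * ((clausen θ + θ * log (|θ|) : ℝ) : ℂ) := by
    push_cast
    ring
  calc _ = ‖2 * Complex.I * clausen θ + 2 * Complex.I * θ * (log |θ| : ℝ)‖ := by
        rw [← tsum_signExpTerm]
        rfl
    _ = 2 * |clausen θ + θ * log (|θ|)| := by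
        rw [hfactor, norm_mul, norm_mul, Complex.norm_I, Complex.norm_real, Real.norm_eq_abs]
        norm_num
    _ ≤ 2 * (4 * |θ|) := by gcongr; exact abs_clausen_add_mul_log_le (abs_pos.mp h0) h1
    _ = 8 * |θ| := by ring
end

section
/- Let b > 0 and let κ, k be real numbers with k > 0 and k ≠ |κ + nb| for every integer n; for n ∈ ℤ set κ_n = κ + nb, define ζ_n = √(k² − κ_n²) (the positive real square root) when |κ_n| < k and ζ_n = i√(κ_n² − k²) when |κ_n| > k. Then for every real θ with θ/(2π) ∉ ℤ, the symmetric partial sums S_N = Σ_{1 ≤ |n| ≤ N} e^{inθ}/ζ_n converge in ℂ as N → ∞. -/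
/-!
For `|n|` large, `|κ_n| > k`, so `ζ_n = i √(κ_n² − k²)` and the `n`-th term is
`−i e^{inθ} / √(κ_n² − k²)`, whose real factor decreases monotonically to `0`. Since `e^{iθ} ≠ 1`,
the partial sums of `e^{inθ}` are bounded, and Dirichlet's test gives convergence of each of the
one-sided series `∑_{n ≥ 1}` and `∑_{n ≤ -1}`; the second is the first for `(-κ, -θ)`.
-/

open Real Filter

open Finset Topology

theorem sum_erase_zero_Icc_neg_eq_sum_range {M : Type*} [AddCommMonoid M] (g : ℤ → M) (N : ℕ) :
    ∑ n ∈ (Icc (-(N : ℤ)) N).erase 0, g n = ∑ i ∈ range N, (g (i + 1) + g (-(i + 1))) := by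
  induction N with
  | zero => simp
  | succ N ih =>
    have hIcc : (Icc (-((N + 1 : ℕ) : ℤ)) (N + 1 : ℕ)).erase 0
        = insert ((N : ℤ) + 1) (insert (-((N : ℤ) + 1)) ((Icc (-(N : ℤ)) N).erase 0)) := by
      ext n; simp only [mem_erase, mem_Icc, mem_insert]; omega
    rw [hIcc, sum_insert (by simp only [mem_insert, mem_erase, mem_Icc]; omega),
      sum_insert (by simp only [mem_erase, mem_Icc]; omega), ih, sum_range_succ]
    abel

theorem CauchySeq.sum_range_of_add_left {E : Type*} [NormedAddCommGroup E] {a : ℕ → E} (m : ℕ)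
    (h : CauchySeq fun N ↦ ∑ i ∈ range N, a (m + i)) :
    CauchySeq fun N ↦ ∑ i ∈ range N, a i := by
  rw [← cauchySeq_shift m]
  simp_rw [add_comm _ m, sum_range_add]
  exact (cauchySeq_const _).add h

theorem norm_geom_sum_le_of_norm_eq_one {𝕜 : Type*} [NormedDivisionRing 𝕜] {w : 𝕜}
    (hw1 : ‖w‖ = 1) (hw : w ≠ 1) (n : ℕ) : ‖∑ i ∈ range n, w ^ i‖ ≤ 2 / ‖w - 1‖ := by
  rw [geom_sum_eq hw, norm_div]
  gcongr
  calc ‖w ^ n - 1‖ ≤ ‖w ^ n‖ + ‖(1 : 𝕜)‖ := norm_sub_le _ _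
    _ = 2 := by rw [norm_pow, hw1]; norm_num

theorem cauchySeq_sum_range_smul_mul_geom {𝕜 : Type*} [NormedDivisionRing 𝕜] [NormedSpace ℝ 𝕜]
    {w : 𝕜} (hw1 : ‖w‖ = 1) (hw : w ≠ 1) (c : 𝕜) {f : ℕ → ℝ} (hf : Antitone f)
    (hf0 : Tendsto f atTop (𝓝 0)) :
    CauchySeq fun N ↦ ∑ i ∈ range N, f i • (c * w ^ i) := by
  refine hf.cauchySeq_series_mul_of_tendsto_zero_of_bounded hf0 (b := ‖c‖ * (2 / ‖w - 1‖))
    fun n ↦ ?_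
  rw [← mul_sum, norm_mul]
  gcongr
  exact norm_geom_sum_le_of_norm_eq_one hw1 hw n

theorem Complex.exp_ofReal_mul_I_ne_one {θ : ℝ} (hθ : ∀ m : ℤ, θ ≠ 2 * π * m) :
    Complex.exp (θ * Complex.I) ≠ 1 := by
  rw [Ne, Complex.exp_eq_one_iff]
  rintro ⟨m, hm⟩
  apply hθ m
  have : θ = m * (2 * π) := by simpa using congrArg Complex.im hm
  linarith

theorem antitone_inv_sqrt_sq_sub_sq {b c k : ℝ} (hb : 0 ≤ b) (hc : |k| < c) :
    Antitone fun i : ℕ ↦ (√((c + i * b) ^ 2 - k ^ 2))⁻¹ := by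
  intro i j hij
  have hk : |k| < c + i * b := by
    have : (0 : ℝ) ≤ i * b := by positivity
    linarith
  have hpos : 0 < (c + i * b) ^ 2 - k ^ 2 := by nlinarith [abs_nonneg k, sq_abs k]
  have hsq : (c + i * b) ^ 2 ≤ (c + j * b) ^ 2 :=
    pow_le_pow_left₀ ((abs_nonneg k).trans hk.le) (by gcongr) 2
  exact inv_anti₀ (Real.sqrt_pos.2 hpos) (Real.sqrt_le_sqrt (by linarith))

theorem tendsto_inv_sqrt_sq_sub_sq {b c k : ℝ} (hb : 0 < b) :
    Tendsto (fun i : ℕ ↦ (√((c + i * b) ^ 2 - k ^ 2))⁻¹) atTop (𝓝 0) := by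
  have hlin : Tendsto (fun i : ℕ ↦ c + i * b) atTop atTop :=
    tendsto_atTop_add_const_left _ _ (tendsto_natCast_atTop_atTop.atTop_mul_const hb)
  refine tendsto_inv_atTop_zero.comp (tendsto_sqrt_atTop.comp ?_)
  simp_rw [sub_eq_add_neg]
  exact tendsto_atTop_add_const_right _ _ ((tendsto_pow_atTop two_ne_zero).comp hlin)

theorem zeta_of_le {b κ k : ℝ} {n : ℤ} (h : k ≤ |κ + n * b|) :
    zeta b κ k n = Complex.I * √((κ + n * b) ^ 2 - k ^ 2) :=
  if_neg h.not_gt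

theorem zeta_neg (b κ k : ℝ) (n : ℤ) : zeta b κ k (-n) = zeta b (-κ) k n := by
  have h : κ + ((-n : ℤ) : ℝ) * b = -(-κ + n * b) := by push_cast; ring
  simp only [zeta, h, abs_neg, neg_sq]

theorem exp_mul_div_zeta_neg (b κ k θ : ℝ) (n : ℤ) :
    Complex.exp (Complex.I * ((-n : ℤ) : ℂ) * θ) / zeta b κ k (-n)
      = Complex.exp (Complex.I * (n : ℂ) * ((-θ : ℝ) : ℂ)) / zeta b (-κ) k n := by
  rw [zeta_neg]
  push_cast
  ring_nf

theorem cauchySeq_sum_range_exp_div_zeta {b κ k θ : ℝ} (hb : 0 < b)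
    (hθ : ∀ m : ℤ, θ ≠ 2 * π * m) :
    CauchySeq fun N : ℕ ↦ ∑ i ∈ range N,
      Complex.exp (Complex.I * ((i + 1 : ℤ) : ℂ) * θ) / zeta b κ k (i + 1) := by
  obtain ⟨m, hm⟩ : ∃ m : ℕ, |k| < κ + (m + 1) * b := by
    obtain ⟨m, hm⟩ := exists_nat_gt ((|k| - κ) / b)
    exact ⟨m, by rw [div_lt_iff₀ hb] at hm; nlinarith⟩
  set c := κ + (m + 1) * b
  set w := Complex.exp (θ * Complex.I)
  have hterm : ∀ i : ℕ, Complex.exp (Complex.I * ((((m + i : ℕ) : ℤ) + 1 : ℤ) : ℂ) * θ)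
      / zeta b κ k (((m + i : ℕ) : ℤ) + 1)
        = (√((c + i * b) ^ 2 - k ^ 2))⁻¹ • (-Complex.I * w ^ (m + 1) * w ^ i) := by
    intro i
    have hκ : κ + ((((m + i : ℕ) : ℤ) + 1 : ℤ) : ℝ) * b = c + i * b := by push_cast; ring
    have hexp : Complex.I * ((((m + i : ℕ) : ℤ) + 1 : ℤ) : ℂ) * θ
        = ((m + 1 + i : ℕ) : ℂ) * (θ * Complex.I) := by push_cast; ring
    have hk : k ≤ |c + i * b| := by
      have : (0 : ℝ) ≤ i * b := by positivity
      linarith [le_abs_self k, le_abs_self (c + i * b)]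
    rw [zeta_of_le (by rwa [hκ]), hκ, hexp, Complex.exp_nat_mul, mul_assoc, ← pow_add,
      Complex.real_smul, Complex.ofReal_inv, div_eq_mul_inv, mul_inv, Complex.inv_I]
    ring
  refine CauchySeq.sum_range_of_add_left m ?_
  simp_rw [hterm]
  exact cauchySeq_sum_range_smul_mul_geom (Complex.norm_exp_ofReal_mul_I θ)
    (Complex.exp_ofReal_mul_I_ne_one hθ) _ (antitone_inv_sqrt_sq_sub_sq hb.le hm)
    (tendsto_inv_sqrt_sq_sub_sq hb)

theorem stmt_10_general (b κ k : ℝ) (hb : 0 < b)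
    (θ : ℝ) (hθ : ∀ m : ℤ, θ ≠ 2 * π * (m : ℝ)) :
    ∃ L : ℂ, Tendsto
      (fun N : ℕ => ∑ n ∈ (Finset.Icc (-(N : ℤ)) (N : ℤ)).erase 0,
        Complex.exp (Complex.I * ((n : ℤ) : ℂ) * (θ : ℂ)) / zeta b κ k n)
      atTop (nhds L) := by
  have hθ_neg : ∀ m : ℤ, -θ ≠ 2 * π * m := fun m h ↦ hθ (-m) (by push_cast; linarith)
  refine cauchySeq_tendsto_of_complete ?_
  simp_rw [sum_erase_zero_Icc_neg_eq_sum_range, sum_add_distrib, exp_mul_div_zeta_neg]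
  exact (cauchySeq_sum_range_exp_div_zeta hb hθ).add (cauchySeq_sum_range_exp_div_zeta hb hθ_neg)

/-- for every real `θ` with `θ/(2π)` not an integer, the symmetric
partial sums `S_N = Σ_{1 ≤ |n| ≤ N} e^{i n θ}/ζ_n` converge in `ℂ` as `N → ∞`. -/
theorem stmt_10 (b κ k : ℝ) (hb : 0 < b) (hk : 0 < k)
    (hcut : ∀ n : ℤ, k ≠ |κ + (n : ℝ) * b|)
    (θ : ℝ) (hθ : ∀ m : ℤ, θ ≠ 2 * π * (m : ℝ)) :
    ∃ L : ℂ, Tendsto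
      (fun N : ℕ => ∑ n ∈ (Finset.Icc (-(N : ℤ)) (N : ℤ)).erase 0,
        Complex.exp (Complex.I * ((n : ℤ) : ℂ) * (θ : ℂ)) / zeta b κ k n)
      atTop (nhds L) :=
  stmt_10_general b κ k hb θ hθ
end
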